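/- Let z = (α, β, M) ∈ Z with |p| ≤ rs, |α| ≤ r, |β| ≤ s and M₀(z) = 0. Then z ∈ K_{r,s}^{Λ,2}. -/

import Mathlib

open Matrix

noncomputable section

/-- Vectors in ℝ³. -/
abbrev V3 := Fin 3 → ℝ
/-- 3×3 real matrices. -/
abbrev Mat3 := Matrix (Fin 3) (Fin 3) ℝ
/-- The state space Z = ℝ³ × ℝ³ × ℝ^{3×3}. -/
abbrev Z := V3 × V3 × Mat3

/-- Euclidean dot product on ℝ³. -/
def dot3 (u v : V3) : ℝ := ∑ i, u i * v i
/-- Euclidean norm on ℝ³. -/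
def norm3 (v : V3) : ℝ := Real.sqrt (dot3 v v)
/-- Outer (tensor) product u ⊗ v. -/
def outer (u v : V3) : Mat3 := Matrix.vecMulVec u v

/-- The constraint set K_{r,s}. -/
def Krs (r s p : ℝ) : Set Z :=
  {z | z.2.2 = outer z.1 z.2.1 + p • (1 : Mat3) ∧ norm3 z.1 = r ∧ norm3 z.2.1 = s}

/-- The wave cone Λ. -/
def waveCone : Set Z :=
  {z | ∃ (ξ : V3) (c : ℝ), ξ ≠ 0 ∧ z.2.2 *ᵥ ξ + c • z.1 = 0 ∧
    z.2.2ᵀ *ᵥ ξ + c • z.2.1 = 0 ∧ dot3 z.1 ξ = 0 ∧ dot3 z.2.1 ξ = 0}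

/-- M₀(z) = α⊗β − M + p·Id. -/
def M0 (p : ℝ) (z : Z) : Mat3 := outer z.1 z.2.1 - z.2.2 + p • (1 : Mat3)

/-- G(z) = √((r² − |α|²)(s² − |β|²)). -/
def Gfun (r s : ℝ) (z : Z) : ℝ :=
  Real.sqrt ((r ^ 2 - norm3 z.1 ^ 2) * (s ^ 2 - norm3 z.2.1 ^ 2))

/-- Iterated lamination sets K_{r,s}^{Λ,i}. -/
def lamSet (r s p : ℝ) : ℕ → Set Z
  | 0 => Krs r s p
  | (i + 1) => {z | ∃ zb ∈ waveCone, ∃ t₁ t₂ : ℝ, t₁ ≤ 0 ∧ 0 ≤ t₂ ∧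
      z + t₁ • zb ∈ lamSet r s p i ∧ z + t₂ • zb ∈ lamSet r s p i}

/-- Nuclear norm: trace of the PSD square root of AᵀA. -/
def nuclearNorm (A : Mat3) : ℝ :=
  ((Matrix.posSemidef_conjTranspose_mul_self A).1.eigenvectorUnitary.1 *
    Matrix.diagonal ((RCLike.ofReal : ℝ → ℝ) ∘ (√·) ∘ (Matrix.posSemidef_conjTranspose_mul_self A).1.eigenvalues) *
    (star (Matrix.posSemidef_conjTranspose_mul_self A).1.eigenvectorUnitary : Mat3)).trace

/-- f₀(A) = (A₂₃, A₃₁, A₁₂) (0-indexed: (A 1 2, A 2 0, A 0 1)). -/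
def f0 (A : Mat3) : V3 := ![A 1 2, A 2 0, A 0 1]

/-- Frobenius norm of a matrix. -/
def frobNorm (A : Mat3) : ℝ := Real.sqrt (∑ i, ∑ j, A i j ^ 2)

/-- Λ-convexity of a set. -/
def LambdaConvex (S : Set Z) : Prop :=
  ∀ z₁ ∈ S, ∀ z₂ ∈ S, z₁ - z₂ ∈ waveCone →
    ∀ t : ℝ, t ∈ Set.Icc (0 : ℝ) 1 → z₁ + t • (z₂ - z₁) ∈ S

/-- The Λ-convex hull of K_{r,s}: the intersection of all Λ-convex sets containing it. -/
def lambdaHull (r s p : ℝ) : Set Z := ⋂₀ {S : Set Z | LambdaConvex S ∧ Krs r s p ⊆ S}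


lemma norm3_smul (c : ℝ) (v : V3) : norm3 (c • v) = |c| * norm3 v := by
  unfold norm3 dot3
  have h : ∑ i, (c • v) i * (c • v) i = c ^ 2 * ∑ i, v i * v i := by
    rw [Finset.mul_sum]; apply Finset.sum_congr rfl; intro i _
    simp [Pi.smul_apply, smul_eq_mul]; ring
  rw [h, Real.sqrt_mul (sq_nonneg c), Real.sqrt_sq_eq_abs]

lemma norm3_pos_of_ne (v : V3) (h : v ≠ 0) : 0 < norm3 v := by
  unfold norm3
  apply Real.sqrt_pos.2
  obtain ⟨i, hi⟩ : ∃ i, v i ≠ 0 := by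
    by_contra hc; push_neg at hc; exact h (funext hc)
  apply Finset.sum_pos' (fun j _ => mul_self_nonneg _)
  exact ⟨i, Finset.mem_univ i, mul_self_pos.2 hi⟩

lemma exists_perp (b : V3) : ∃ ξ : V3, ξ ≠ 0 ∧ dot3 b ξ = 0 := by
  by_cases h0 : b 0 = 0 ∧ b 1 = 0
  · refine ⟨![1, 0, 0], ?_, ?_⟩
    · intro h; have := congrFun h 0; simp at this
    · simp [dot3, Fin.sum_univ_three, h0.1]
  · refine ⟨![b 1, -(b 0), 0], ?_, ?_⟩
    · intro h
      apply h0
      have h1 := congrFun h 0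
      have h2 := congrFun h 1
      simp at h1 h2
      exact ⟨h2, h1⟩
    · simp [dot3, Fin.sum_univ_three]; ring

lemma outer_mulVec (u v ξ : V3) : outer u v *ᵥ ξ = dot3 v ξ • u := by
  funext i
  simp [outer, Matrix.mulVec, Matrix.vecMulVec_apply, dotProduct, dot3,
    Finset.sum_mul, Pi.smul_apply, smul_eq_mul]
  apply Finset.sum_congr rfl; intro j _; ring

lemma outer_transpose (u v : V3) : (outer u v)ᵀ = outer v u := by
  funext i j
  simp [outer, Matrix.transpose_apply, Matrix.vecMulVec_apply]; ring

lemma outer_add_right (u w b : V3) (t : ℝ) :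
    outer u (w + t • b) = outer u w + t • outer u b := by
  funext i j
  simp [outer, Matrix.vecMulVec_apply, Pi.smul_apply, smul_eq_mul]; ring

lemma outer_add_left (w a v : V3) (t : ℝ) :
    outer (w + t • a) v = outer w v + t • outer a v := by
  funext i j
  simp [outer, Matrix.vecMulVec_apply, Pi.smul_apply, smul_eq_mul]; ring

lemma waveB (u b : V3) : ((0 : V3), b, outer u b) ∈ waveCone := by
  obtain ⟨ξ, hξ, hperp⟩ := exists_perp b
  refine ⟨ξ, -(dot3 u ξ), hξ, ?_, ?_, ?_, hperp⟩
  · simp [outer_mulVec, hperp]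
  · rw [outer_transpose, outer_mulVec]
    funext i; simp [Pi.smul_apply, smul_eq_mul]
  · simp [dot3]

lemma waveA (a v : V3) : (a, (0 : V3), outer a v) ∈ waveCone := by
  obtain ⟨ξ, hξ, hperp⟩ := exists_perp a
  refine ⟨ξ, -(dot3 v ξ), hξ, ?_, ?_, hperp, ?_⟩
  · rw [outer_mulVec]
    funext i; simp [Pi.smul_apply, smul_eq_mul]
  · rw [outer_transpose, outer_mulVec]
    simp [hperp]
  · simp [dot3]

lemma hit_sphere (r : ℝ) (hr : 0 < r) (v : V3) (hv : norm3 v ≤ r) :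
    ∃ (b : V3) (t₁ t₂ : ℝ), t₁ ≤ 0 ∧ 0 ≤ t₂ ∧
      norm3 (v + t₁ • b) = r ∧ norm3 (v + t₂ • b) = r := by
  by_cases h : v = 0
  · subst h
    have key : ∀ t : ℝ, norm3 ((0 : V3) + t • ![1, 0, 0]) = |t| := by
      intro t
      rw [zero_add, norm3_smul]
      have : norm3 ![(1:ℝ), 0, 0] = 1 := by
        simp [norm3, dot3, Fin.sum_univ_three]
      rw [this, mul_one]
    exact ⟨![1, 0, 0], -r, r, by linarith, le_of_lt hr,
      by rw [key]; rw [abs_neg, abs_of_pos hr], by rw [key]; exact abs_of_pos hr⟩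
  · have hn := norm3_pos_of_ne v h
    have hcomb : ∀ t : ℝ, v + t • v = (1 + t) • v := by
      intro t; funext i; simp [Pi.smul_apply, smul_eq_mul]; ring
    have hone : (1 : ℝ) ≤ r / norm3 v := (le_div_iff₀ hn).2 (by linarith)
    refine ⟨v, -(r / norm3 v) - 1, r / norm3 v - 1, by linarith, by linarith, ?_, ?_⟩
    · rw [hcomb, norm3_smul]
      have : (1 + (-(r / norm3 v) - 1)) = -(r / norm3 v) := by ring
      rw [this, abs_neg, abs_of_pos (by positivity), div_mul_cancel₀ _ (ne_of_gt hn)]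
    · rw [hcomb, norm3_smul]
      have : (1 + (r / norm3 v - 1)) = r / norm3 v := by ring
      rw [this, abs_of_pos (by positivity), div_mul_cancel₀ _ (ne_of_gt hn)]

lemma mem_lam1 (r s p : ℝ) (hs : 0 < s) (z : Z)
    (hMz : z.2.2 = outer z.1 z.2.1 + p • (1 : Mat3))
    (hα : norm3 z.1 = r) (hβ : norm3 z.2.1 ≤ s) : z ∈ lamSet r s p 1 := by
  obtain ⟨b, t₁, t₂, ht₁, ht₂, hn₁, hn₂⟩ := hit_sphere s hs z.2.1 hβ
  refine ⟨((0 : V3), b, outer z.1 b), waveB z.1 b, t₁, t₂, ht₁, ht₂, ?_, ?_⟩ <;>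
  · refine ⟨?_, ?_, ?_⟩
    · show z.2.2 + _ • outer z.1 b = outer (z.1 + _ • (0:V3)) (z.2.1 + _ • b) + p • (1 : Mat3)
      rw [hMz, smul_zero, add_zero, outer_add_right]
      abel
    · show norm3 (z.1 + _ • (0 : V3)) = r
      rw [smul_zero, add_zero]; exact hα
    · assumption

theorem stmt4 (r s p : ℝ) (hr : 0 < r) (hs : 0 < s) (z : Z)
    (hp : |p| ≤ r * s) (hα : norm3 z.1 ≤ r) (hβ : norm3 z.2.1 ≤ s)
    (hM : M0 p z = 0) :
    z ∈ lamSet r s p 2 := by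
  have hMz : z.2.2 = outer z.1 z.2.1 + p • (1 : Mat3) := by
    have h2 : outer z.1 z.2.1 - z.2.2 + p • (1 : Mat3) = 0 := hM
    have h3 : outer z.1 z.2.1 + p • (1 : Mat3) - z.2.2 = 0 := by rw [← h2]; abel
    exact (sub_eq_zero.mp h3).symm
  obtain ⟨a, t₁, t₂, ht₁, ht₂, hn₁, hn₂⟩ := hit_sphere r hr z.1 hα
  refine ⟨(a, (0 : V3), outer a z.2.1), waveA a z.2.1, t₁, t₂, ht₁, ht₂, ?_, ?_⟩ <;>
  · apply mem_lam1 r s p hs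
    · show z.2.2 + _ • outer a z.2.1 =
        outer (z.1 + _ • a) (z.2.1 + _ • (0 : V3)) + p • (1 : Mat3)
      rw [smul_zero, add_zero, hMz, outer_add_left]
      abel
    · assumption
    · show norm3 (z.2.1 + _ • (0 : V3)) ≤ s
      rw [smul_zero, add_zero]; exact hβ
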